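/- (λ-convexity of the cohesive energy.) Let Ω ⊆ ℝⁿ be a bounded measurable set, let γ : Ω → [0,∞) be measurable, and let δ^a, δ^b : Ω → [0,∞) be measurable with δ^a − δ^b ∈ L²(Ω). Then for every θ ∈ [0,1]: ∫_Ω Φ(θδ^a(x) + (1−θ)δ^b(x), γ(x)) dx ≤ θ∫_Ω Φ(δ^a(x), γ(x)) dx + (1−θ)∫_Ω Φ(δ^b(x), γ(x)) dx + (λ/2)·θ(1−θ)·‖δ^a − δ^b‖²_{L²(Ω)}. -/

import Mathlib

set_option autoImplicit false

open Set MeasureTheory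

/-!
For fixed `z ≥ 0`, the function `y ↦ Φ(y, z) + (λ/2) y²` is differentiable on `[0, ∞)` with
derivative `(ψ'(z)/z + λ) y` for `y < z` and `ψ'(y) + λ y` for `y ≥ z`. The first piece is
nondecreasing because `ψ' ≥ 0` and `λ ≥ 0`, the second because `ψ'' ≥ -λ`, and the two agree at
`y = z`; hence the function is convex, which is the λ-convexity inequality pointwise in `x`.
Integrating it over `Ω` gives the claim: `0 ≤ Φ ≤ sup ψ` makes the three energies integrable on the
bounded set `Ω`, and the defect term is integrable because `δᵃ - δᵇ ∈ L²(Ω)`.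
-/

theorem ContinuousOn.measurable_comp_of_mapsTo {α β γ : Type*} [MeasurableSpace α]
    [TopologicalSpace β] [MeasurableSpace β] [BorelSpace β]
    [TopologicalSpace γ] [MeasurableSpace γ] [BorelSpace γ]
    {f : β → γ} {s : Set β} (hf : ContinuousOn f s) {g : α → β} (hg : Measurable g)
    (hgs : ∀ x, g x ∈ s) : Measurable fun x => f (g x) :=
  hf.domRestrict.measurable.comp (hg.subtype_mk (h := hgs))

theorem ConvexOn.map_combo_le_of_add_sq {s : Set ℝ} {f : ℝ → ℝ} {c : ℝ}
    (hf : ConvexOn ℝ s fun y => f y + c * y ^ 2) {a b θ : ℝ} (ha : a ∈ s) (hb : b ∈ s)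
    (hθ : θ ∈ Icc (0 : ℝ) 1) :
    f (θ * a + (1 - θ) * b) ≤ θ * f a + (1 - θ) * f b + c * θ * (1 - θ) * (a - b) ^ 2 := by
  have h := hf.2 ha hb hθ.1 (sub_nonneg.2 hθ.2) (add_sub_cancel θ 1)
  simp only [smul_eq_mul] at h
  linear_combination h

theorem MonotoneOn.convexOn_of_hasDerivWithinAt {D : Set ℝ} {f f' : ℝ → ℝ}
    (hf' : MonotoneOn f' D) (hD : Convex ℝ D) (hf : ∀ x ∈ D, HasDerivWithinAt f (f' x) D x) :
    ConvexOn ℝ D f := by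
  have hderiv : ∀ x ∈ interior D, HasDerivAt f (f' x) x := fun x hx =>
    (hf x (interior_subset hx)).hasDerivAt (mem_interior_iff_mem_nhds.mp hx)
  refine MonotoneOn.convexOn_of_deriv hD (fun x hx => (hf x hx).continuousWithinAt)
    (fun x hx => (hderiv x hx).differentiableAt.differentiableWithinAt) ?_
  exact (hf'.mono interior_subset).congr fun x hx => (hderiv x hx).deriv.symm

theorem monotoneOn_add_mul_of_hasDerivWithinAt {D : Set ℝ} (hD : Convex ℝ D) {f f' : ℝ → ℝ}
    {c : ℝ} (hf : ∀ x ∈ D, HasDerivWithinAt f (f' x) D x) (hf' : ∀ x ∈ D, -c ≤ f' x) :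
    MonotoneOn (fun x => f x + c * x) D := by
  have hg : ∀ x ∈ D, HasDerivWithinAt (fun x => f x + c * x) (f' x + c) D x := fun x hx =>
    (hf x hx).add (((hasDerivWithinAt_id x D).const_mul c).congr_deriv (mul_one c))
  refine monotoneOn_of_hasDerivWithinAt_nonneg hD (fun x hx => (hg x hx).continuousWithinAt)
    (fun x hx => (hg x (interior_subset hx)).mono interior_subset) fun x hx => ?_
  linarith [hf' x (interior_subset hx)]

theorem HasDerivWithinAt.ite_lt {g h g' h' : ℝ → ℝ} {s : Set ℝ} {z y : ℝ}
    (hg : y ≤ z → HasDerivWithinAt g (g' y) s y) (hh : z ≤ y → HasDerivWithinAt h (h' y) s y)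
    (hz : g z = h z) (hz' : g' z = h' z) :
    HasDerivWithinAt (fun x => if x < z then g x else h x) (if y < z then g' y else h' y) s y := by
  rcases lt_trichotomy y z with hy | rfl | hy
  · rw [if_pos hy]
    refine (hg hy.le).congr_of_eventuallyEq ?_ (if_pos hy)
    filter_upwards [nhdsWithin_le_nhds (eventually_lt_nhds hy)] with x hx using if_pos hx
  · rw [if_neg (lt_irrefl y)]
    have hleft : HasDerivWithinAt (fun x => if x < y then g x else h x) (h' y) (s ∩ Iic y) y := by
      refine ((hz' ▸ hg le_rfl).mono inter_subset_left).congr (fun x hx => ?_) (by simp [hz])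
      rcases (mem_Iic.1 hx.2).lt_or_eq with hxy | rfl
      · exact if_pos hxy
      · simp [hz]
    have hright : HasDerivWithinAt (fun x => if x < y then g x else h x) (h' y) (s ∩ Ici y) y :=
      ((hh le_rfl).mono inter_subset_left).congr (fun x hx => if_neg (not_lt.2 hx.2))
        (if_neg (lt_irrefl y))
    simpa [← inter_union_distrib_left] using hleft.union hright
  · rw [if_neg (not_lt.2 hy.le)]
    refine (hh hy.le).congr_of_eventuallyEq ?_ (if_neg (not_lt.2 hy.le))
    filter_upwards [nhdsWithin_le_nhds (eventually_gt_nhds hy)] with x hx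
      using if_neg (not_lt.2 hx.le)

theorem HasDerivWithinAt.nonneg_of_monotoneOn_Ici {f : ℝ → ℝ} {f' a x : ℝ}
    (hd : HasDerivWithinAt f f' (Ici a) x) (hf : MonotoneOn f (Ici a)) (hx : a ≤ x) : 0 ≤ f' :=
  hd.derivWithin (uniqueDiffOn_Ici a x hx) ▸ hf.derivWithin_nonneg

theorem ConcaveOn.mul_le_sub_of_hasDerivWithinAt {f : ℝ → ℝ} {f' z : ℝ}
    (hf : ConcaveOn ℝ (Ici 0) f) (hd : HasDerivWithinAt f f' (Ici 0) z) (hz : 0 ≤ z) :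
    z * f' ≤ f z - f 0 := by
  rcases hz.eq_or_lt with rfl | hz
  · simp
  have h := hf.le_slope_of_hasDerivWithinAt self_mem_Ici hz.le hz hd
  rw [slope_def_field, sub_zero, le_div_iff₀ hz] at h
  linarith

theorem integral_le_of_le_linear_combination {α : Type*} [MeasurableSpace α] {μ : Measure α}
    {f g₁ g₂ g₃ : α → ℝ} {a b c : ℝ} (hf : Integrable f μ) (hg₁ : Integrable g₁ μ)
    (hg₂ : Integrable g₂ μ) (hg₃ : Integrable g₃ μ)
    (h : ∀ x, f x ≤ a * g₁ x + b * g₂ x + c * g₃ x) :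
    ∫ x, f x ∂μ ≤ a * ∫ x, g₁ x ∂μ + b * ∫ x, g₂ x ∂μ + c * ∫ x, g₃ x ∂μ := by
  have hg₁₂ : Integrable (fun x => a * g₁ x + b * g₂ x) μ :=
    (hg₁.const_mul a).add (hg₂.const_mul b)
  calc ∫ x, f x ∂μ ≤ ∫ x, a * g₁ x + b * g₂ x + c * g₃ x ∂μ :=
        integral_mono hf (hg₁₂.add (hg₃.const_mul c)) h
    _ = a * ∫ x, g₁ x ∂μ + b * ∫ x, g₂ x ∂μ + c * ∫ x, g₃ x ∂μ := by
      rw [integral_add hg₁₂ (hg₃.const_mul c), integral_add (hg₁.const_mul a) (hg₂.const_mul b),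
        integral_const_mul, integral_const_mul, integral_const_mul]

noncomputable def cohesiveEnergy (ψ ψd : ℝ → ℝ) (y z : ℝ) : ℝ :=
  if y < z then ψd z / (2 * z) * y ^ 2 + ψ z - z * ψd z / 2 else ψ y

section CohesiveEnergy

variable {ψ ψd ψdd : ℝ → ℝ} {lam : ℝ}

theorem convexOn_cohesiveEnergy_add_sq (hlam : 0 ≤ lam) (hmono : StrictMonoOn ψ (Ici 0))
    (hd1 : ∀ z ∈ Ici (0 : ℝ), HasDerivWithinAt ψ (ψd z) (Ici 0) z)
    (hd2 : ∀ z ∈ Ici (0 : ℝ), HasDerivWithinAt ψd (ψdd z) (Ici 0) z)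
    (hlow : ∀ z ∈ Ici (0 : ℝ), -lam ≤ ψdd z) {z : ℝ} (hz : 0 ≤ z) :
    ConvexOn ℝ (Ici 0) fun y => cohesiveEnergy ψ ψd y z + lam / 2 * y ^ 2 := by
  have hψ : ∀ y ∈ Ici (0 : ℝ),
      HasDerivWithinAt (fun y => ψ y + lam / 2 * y ^ 2) (ψd y + lam * y) (Ici 0) y := fun y hy =>
    ((hd1 y hy).add ((hasDerivWithinAt_pow 2 y).const_mul (lam / 2))).congr_deriv (by ring)
  have hψd : MonotoneOn (fun y => ψd y + lam * y) (Ici 0) :=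
    monotoneOn_add_mul_of_hasDerivWithinAt (convex_Ici 0) hd2 hlow
  rcases hz.eq_or_lt with rfl | hz
  · refine (hψd.convexOn_of_hasDerivWithinAt (convex_Ici 0) hψ).congr fun y hy => ?_
    simp [cohesiveEnergy, not_lt.2 (mem_Ici.1 hy)]
  -- on `[0, z]` the function is the parabola `c/2 y² + const`
  set c := ψd z / z + lam with hc_def
  have hc : 0 ≤ c :=
    add_nonneg (div_nonneg ((hd1 z hz.le).nonneg_of_monotoneOn_Ici hmono.monotoneOn hz.le) hz.le)
      hlam
  have hcz : c * z = ψd z + lam * z := by rw [hc_def]; field_simp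
  have hder : ∀ y ∈ Ici (0 : ℝ), HasDerivWithinAt
      (fun y => cohesiveEnergy ψ ψd y z + lam / 2 * y ^ 2)
      (if y < z then c * y else ψd y + lam * y) (Ici 0) y := by
    intro y hy
    have hpar : HasDerivWithinAt (fun y => c / 2 * y ^ 2 + (ψ z - z * ψd z / 2)) (c * y)
        (Ici 0) y :=
      (((hasDerivWithinAt_pow 2 y).const_mul (c / 2)).add_const _).congr_deriv (by ring)
    convert HasDerivWithinAt.ite_lt (z := z) (g' := fun y => c * y)
      (h' := fun y => ψd y + lam * y) (fun _ => hpar) (fun hzy => hψ y (hz.le.trans hzy))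
      (by linear_combination z / 2 * hcz) hcz using 1
    funext x
    unfold cohesiveEnergy
    split_ifs
    · rw [hc_def]; ring
    · rfl
  refine MonotoneOn.convexOn_of_hasDerivWithinAt ?_ (convex_Ici 0) hder
  rw [← Icc_union_Ici_eq_Ici hz.le]
  refine MonotoneOn.union_right ?_ ?_ (isGreatest_Icc hz.le) isLeast_Ici
  · refine ((monotone_mul_left_of_nonneg hc).monotoneOn _).congr fun y hy => ?_
    rcases hy.2.lt_or_eq with hyz | rfl
    · simp [hyz]
    · simp [hcz]
  · exact (hψd.mono (Ici_subset_Ici.2 hz.le)).congr fun y hy => (if_neg (not_lt.2 hy)).symm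

theorem cohesiveEnergy_mem_Icc (hmono : StrictMonoOn ψ (Ici 0))
    (hbdd : BddAbove (ψ '' Ici 0)) (hconc : ConcaveOn ℝ (Ici 0) ψ)
    (hd1 : ∀ z ∈ Ici (0 : ℝ), HasDerivWithinAt ψ (ψd z) (Ici 0) z) (hψ0 : ψ 0 = 0)
    {y z : ℝ} (hy : 0 ≤ y) :
    cohesiveEnergy ψ ψd y z ∈ Icc 0 (sSup (ψ '' Ici 0)) := by
  have hψ_nonneg : ∀ {t : ℝ}, 0 ≤ t → 0 ≤ ψ t := fun ht => hψ0 ▸ hmono.monotoneOn self_mem_Ici ht ht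
  have hψ_le : ∀ {t : ℝ}, 0 ≤ t → ψ t ≤ sSup (ψ '' Ici 0) := fun ht => le_csSup hbdd ⟨_, ht, rfl⟩
  unfold cohesiveEnergy
  split_ifs with hyz
  · have hz : 0 < z := hy.trans_lt hyz
    have hψdz : 0 ≤ ψd z := (hd1 z hz.le).nonneg_of_monotoneOn_Ici hmono.monotoneOn hz.le
    have htangent : z * ψd z ≤ ψ z := by
      simpa [hψ0] using hconc.mul_le_sub_of_hasDerivWithinAt (hd1 z hz.le) hz.le
    have hquad : ψd z / (2 * z) * y ^ 2 ≤ z * ψd z / 2 := by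
      calc ψd z / (2 * z) * y ^ 2 ≤ ψd z / (2 * z) * z ^ 2 := by gcongr
        _ = z * ψd z / 2 := by field_simp
    have hquad_nonneg : 0 ≤ ψd z / (2 * z) * y ^ 2 := by positivity
    constructor <;> linarith [hψ_le hz.le]
  · exact ⟨hψ_nonneg hy, hψ_le hy⟩

theorem Measurable.cohesiveEnergy {α : Type*} [MeasurableSpace α] (hψ : ContinuousOn ψ (Ici 0))
    (hψd : ContinuousOn ψd (Ici 0)) {δ γ : α → ℝ} (hδ : Measurable δ) (hγ : Measurable γ)
    (hδ0 : ∀ x, 0 ≤ δ x) (hγ0 : ∀ x, 0 ≤ γ x) :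
    Measurable fun x => cohesiveEnergy ψ ψd (δ x) (γ x) := by
  have hψγ : Measurable fun x => ψ (γ x) := hψ.measurable_comp_of_mapsTo hγ hγ0
  have hψdγ : Measurable fun x => ψd (γ x) := hψd.measurable_comp_of_mapsTo hγ hγ0
  have hψδ : Measurable fun x => ψ (δ x) := hψ.measurable_comp_of_mapsTo hδ hδ0
  refine Measurable.ite (measurableSet_lt hδ hγ) ?_ hψδ
  exact (((hψdγ.div (measurable_const.mul hγ)).mul (hδ.pow_const 2)).add hψγ).sub
    ((hγ.mul hψdγ).div_const 2)

theorem integrableOn_cohesiveEnergy {α : Type*} [MeasurableSpace α] {μ : Measure α}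
    {s : Set α} (hs : μ s < ⊤) (hmono : StrictMonoOn ψ (Ici 0)) (hbdd : BddAbove (ψ '' Ici 0))
    (hconc : ConcaveOn ℝ (Ici 0) ψ) (hd1 : ∀ z ∈ Ici (0 : ℝ), HasDerivWithinAt ψ (ψd z) (Ici 0) z)
    (hψ0 : ψ 0 = 0) (hψd : ContinuousOn ψd (Ici 0)) {δ γ : α → ℝ} (hδ : Measurable δ)
    (hγ : Measurable γ) (hδ0 : ∀ x, 0 ≤ δ x) (hγ0 : ∀ x, 0 ≤ γ x) :
    IntegrableOn (fun x => cohesiveEnergy ψ ψd (δ x) (γ x)) s μ := by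
  have hψ : ContinuousOn ψ (Ici 0) := fun z hz => (hd1 z hz).continuousWithinAt
  refine .of_bound hs (hδ.cohesiveEnergy hψ hψd hγ hδ0 hγ0).aestronglyMeasurable
    (sSup (ψ '' Ici 0)) (ae_of_all _ fun x => ?_)
  obtain ⟨h0, hle⟩ := cohesiveEnergy_mem_Icc hmono hbdd hconc hd1 hψ0 (z := γ x) (hδ0 x)
  rwa [Real.norm_of_nonneg h0]

end CohesiveEnergy

theorem stmt_18_general (ψ ψd ψdd : ℝ → ℝ) (lam : ℝ) (hlam : 0 < lam)
    (hmono : StrictMonoOn ψ (Ici (0:ℝ)))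
    (hbdd : BddAbove (ψ '' Ici (0:ℝ)))
    (hconc : ConcaveOn ℝ (Ici (0:ℝ)) ψ)
    (hd1 : ∀ z ∈ Ici (0:ℝ), HasDerivWithinAt ψ (ψd z) (Ici (0:ℝ)) z)
    (hd2 : ∀ z ∈ Ici (0:ℝ), HasDerivWithinAt ψd (ψdd z) (Ici (0:ℝ)) z)
    (hψ0 : ψ 0 = 0)
    (hlow : ∀ z ∈ Ici (0:ℝ), -lam ≤ ψdd z)
    (Φ : ℝ → ℝ → ℝ)
    (hΦ : ∀ y ∈ Ici (0:ℝ), ∀ z ∈ Ici (0:ℝ),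
      Φ y z = if y < z then ψd z / (2*z) * y^2 + ψ z - z * ψd z / 2 else ψ y)
    (n : ℕ) (Ω : Set (Fin n → ℝ))
    (hΩbdd : Bornology.IsBounded Ω)
    (γ δa δb : (Fin n → ℝ) → ℝ)
    (hγmeas : Measurable γ) (hγ0 : ∀ x, 0 ≤ γ x)
    (hδameas : Measurable δa) (hδa0 : ∀ x, 0 ≤ δa x)
    (hδbmeas : Measurable δb) (hδb0 : ∀ x, 0 ≤ δb x)
    (hL2 : Integrable (fun x => (δa x - δb x)^2) (volume.restrict Ω))
    (θ : ℝ) (hθ : θ ∈ Icc (0:ℝ) 1) :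
    (∫ x in Ω, Φ (θ * δa x + (1 - θ) * δb x) (γ x))
      ≤ θ * (∫ x in Ω, Φ (δa x) (γ x)) + (1 - θ) * (∫ x in Ω, Φ (δb x) (γ x))
        + lam / 2 * θ * (1 - θ) * (∫ x in Ω, (δa x - δb x)^2) := by
  have hψdc : ContinuousOn ψd (Ici 0) := fun z hz => (hd2 z hz).continuousWithinAt
  have hint : ∀ δ : (Fin n → ℝ) → ℝ, Measurable δ → (∀ x, 0 ≤ δ x) →
      IntegrableOn (fun x => cohesiveEnergy ψ ψd (δ x) (γ x)) Ω := fun _ hδ hδ0 =>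
    integrableOn_cohesiveEnergy hΩbdd.measure_lt_top hmono hbdd hconc hd1 hψ0 hψdc hδ hγmeas hδ0
      hγ0
  have hΦ_eq : ∀ δ : (Fin n → ℝ) → ℝ, (∀ x, 0 ≤ δ x) →
      (∫ x in Ω, Φ (δ x) (γ x)) = ∫ x in Ω, cohesiveEnergy ψ ψd (δ x) (γ x) := fun _ hδ0 =>
    integral_congr_ae (ae_of_all _ fun x => hΦ _ (hδ0 x) _ (hγ0 x))
  have hmix0 : ∀ x, 0 ≤ θ * δa x + (1 - θ) * δb x := fun x =>
    add_nonneg (mul_nonneg hθ.1 (hδa0 x)) (mul_nonneg (sub_nonneg.2 hθ.2) (hδb0 x))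
  rw [hΦ_eq _ hmix0, hΦ_eq _ hδa0, hΦ_eq _ hδb0]
  exact integral_le_of_le_linear_combination (hint _ (by fun_prop) hmix0)
    (hint δa hδameas hδa0) (hint δb hδbmeas hδb0) hL2 fun x =>
      (convexOn_cohesiveEnergy_add_sq hlam.le hmono hd1 hd2 hlow (hγ0 x)).map_combo_le_of_add_sq
        (hδa0 x) (hδb0 x) hθ

/-- λ-convexity of the cohesive energy: for measurable nonnegative
fields `δᵃ, δᵇ, γ` on a bounded measurable set `Ω` with `δᵃ - δᵇ ∈ L²(Ω)`, and every
`θ ∈ [0,1]`,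
`∫ Φ(θδᵃ + (1-θ)δᵇ, γ) ≤ θ∫ Φ(δᵃ,γ) + (1-θ)∫ Φ(δᵇ,γ) + (λ/2)θ(1-θ)‖δᵃ-δᵇ‖²_{L²}`. -/
theorem stmt_18 (ψ ψd ψdd : ℝ → ℝ) (lam : ℝ) (hlam : 0 < lam)
    (hψmap : ∀ z ∈ Ici (0:ℝ), 0 ≤ ψ z)
    (hmono : StrictMonoOn ψ (Ici (0:ℝ)))
    (hbdd : BddAbove (ψ '' Ici (0:ℝ)))
    (hconc : ConcaveOn ℝ (Ici (0:ℝ)) ψ)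
    (hd1 : ∀ z ∈ Ici (0:ℝ), HasDerivWithinAt ψ (ψd z) (Ici (0:ℝ)) z)
    (hd2 : ∀ z ∈ Ici (0:ℝ), HasDerivWithinAt ψd (ψdd z) (Ici (0:ℝ)) z)
    (hd2cont : ContinuousOn ψdd (Ici (0:ℝ)))
    (hψ0 : ψ 0 = 0) (hψd0 : 0 < ψd 0)
    (hlow : ∀ z ∈ Ici (0:ℝ), -lam ≤ ψdd z)
    (Φ : ℝ → ℝ → ℝ)
    (hΦ : ∀ y ∈ Ici (0:ℝ), ∀ z ∈ Ici (0:ℝ),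
      Φ y z = if y < z then ψd z / (2*z) * y^2 + ψ z - z * ψd z / 2 else ψ y)
    (n : ℕ) (Ω : Set (Fin n → ℝ)) (hΩmeas : MeasurableSet Ω)
    (hΩbdd : Bornology.IsBounded Ω)
    (γ δa δb : (Fin n → ℝ) → ℝ)
    (hγmeas : Measurable γ) (hγ0 : ∀ x, 0 ≤ γ x)
    (hδameas : Measurable δa) (hδa0 : ∀ x, 0 ≤ δa x)
    (hδbmeas : Measurable δb) (hδb0 : ∀ x, 0 ≤ δb x)
    (hL2 : Integrable (fun x => (δa x - δb x)^2) (volume.restrict Ω))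
    (θ : ℝ) (hθ : θ ∈ Icc (0:ℝ) 1) :
    (∫ x in Ω, Φ (θ * δa x + (1 - θ) * δb x) (γ x))
      ≤ θ * (∫ x in Ω, Φ (δa x) (γ x)) + (1 - θ) * (∫ x in Ω, Φ (δb x) (γ x))
        + lam / 2 * θ * (1 - θ) * (∫ x in Ω, (δa x - δb x)^2) :=
  stmt_18_general ψ ψd ψdd lam hlam hmono hbdd hconc hd1 hd2 hψ0 hlow Φ hΦ n Ω hΩbdd γ δa δb hγmeas
    hγ0 hδameas hδa0 hδbmeas hδb0 hL2 θ hθ
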